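/- arXiv:2106.09836 — 2 statements merged into one kernel-verified Lean document; each statement's English description precedes it below -/
import Mathlib

section
/- For cadlag functions f₁, f₂ : [0,∞) → ℝ with only nonnegative jumps, define s(x,y) = sup_{z∈[x,y]} (f₂(z) - f₁(z⁻)). Then s(x,y) - s(x,y⁻) = max(s(y,y) - s(x,y⁻), 0) ≤ f₂(y) - f₂(y⁻), where s(x,y⁻) = sup_{z∈[x,y)} (f₂(z) - f₁(z⁻)). -/
open Filter Set

/-- Left limit with the convention `f(0⁻) = 0`. -/
noncomputable def lml (f : ℝ → ℝ) (z : ℝ) : ℝ := if z ≤ 0 then 0 else Function.leftLim f z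

/-- Cadlag on `[0, ∞)`: right-continuous at every `x ≥ 0`, left limits exist at every `x > 0`. -/
def Cadlag (f : ℝ → ℝ) : Prop :=
  (∀ x : ℝ, 0 ≤ x → ContinuousWithinAt f (Set.Ici x) x) ∧
  (∀ x : ℝ, 0 < x → ∃ l : ℝ, Filter.Tendsto f (nhdsWithin x (Set.Iio x)) (nhds l))

/-- All jumps are nonnegative (with the convention `f(0⁻) = 0`). -/
def NonnegJumps (f : ℝ → ℝ) : Prop := ∀ z : ℝ, 0 ≤ z → lml f z ≤ f z

/-- `S f₁ f₂ x y = sup_{z ∈ [x,y]} (f₂ z - f₁ (z⁻))`. -/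
noncomputable def S (f₁ f₂ : ℝ → ℝ) (x y : ℝ) : ℝ :=
  sSup ((fun z => f₂ z - lml f₁ z) '' Set.Icc x y)

/-- `Sm f₁ f₂ x y = sup_{z ∈ [x,y)} (f₂ z - f₁ (z⁻))`. -/
noncomputable def Sm (f₁ f₂ : ℝ → ℝ) (x y : ℝ) : ℝ :=
  sSup ((fun z => f₂ z - lml f₁ z) '' Set.Ico x y)

/-!
With `g z = f₂ z - f₁ (z⁻)`, the supremum over `[x, y]` is the maximum of the supremum over
`[x, y)` and `g y = s(y, y)`, which is the identity. For the bound, the left-limit function of a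
cadlag function is again left-continuous, so `g z → f₂ (y⁻) - f₁ (y⁻)` as `z ↑ y`; hence
`f₂ (y⁻) - f₁ (y⁻) ≤ s(x, y⁻)`, i.e. `g y - s(x, y⁻) ≤ f₂ y - f₂ (y⁻)`, and the jump of `f₂`
at `y` is nonnegative. All suprema are genuine because cadlag functions are bounded on compact
intervals.
-/

open scoped Topology

namespace Cadlag

variable {f : ℝ → ℝ}

theorem tendsto_lml (hf : Cadlag f) {z : ℝ} (hz : 0 < z) :
    Tendsto f (𝓝[<] z) (𝓝 (lml f z)) := by
  obtain ⟨l, hl⟩ := hf.2 z hz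
  rwa [lml, if_neg hz.not_ge, leftLim_eq_of_tendsto hl]

theorem isBounded_image_Icc (hf : Cadlag f) (y : ℝ) :
    Bornology.IsBounded (f '' Icc 0 y) := by
  refine isCompact_Icc.induction_on (p := fun s => Bornology.IsBounded (f '' s)) (by simp)
    (fun s t hst ht => ht.subset (image_mono hst))
    (fun s t hs ht => by rw [image_union]; exact hs.union ht) fun t ht => ?_
  obtain ⟨U, hU, hUb⟩ := Metric.exists_isBounded_image_of_tendsto (hf.1 t ht.1)
  rcases ht.1.eq_or_lt with rfl | htpos
  · exact ⟨U, nhdsWithin_mono _ Icc_subset_Ici_self hU, hUb⟩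
  · obtain ⟨V, hV, hVb⟩ := Metric.exists_isBounded_image_of_tendsto (hf.tendsto_lml htpos)
    refine ⟨V ∪ U, mem_nhdsWithin_of_mem_nhds ?_, by rw [image_union]; exact hVb.union hUb⟩
    rw [← nhdsLT_sup_nhdsGE]
    exact ⟨mem_of_superset hV subset_union_left, mem_of_superset hU subset_union_right⟩

theorem lml_image_Icc_subset (hf : Cadlag f) (y : ℝ) :
    lml f '' Icc 0 y ⊆ insert 0 (closure (f '' Icc 0 y)) := by
  rintro _ ⟨z, hz, rfl⟩
  rcases hz.1.eq_or_lt with rfl | hzpos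
  · simp [lml]
  · refine mem_insert_of_mem _ (mem_closure_of_tendsto (hf.tendsto_lml hzpos) ?_)
    filter_upwards [Ioo_mem_nhdsLT hzpos] with w hw
    exact mem_image_of_mem f ⟨hw.1.le, hw.2.le.trans hz.2⟩

theorem isBounded_lml_image_Icc (hf : Cadlag f) (y : ℝ) :
    Bornology.IsBounded (lml f '' Icc 0 y) :=
  (((hf.isBounded_image_Icc y).closure).insert 0).subset (hf.lml_image_Icc_subset y)

theorem tendsto_lml_lml (hf : Cadlag f) {y : ℝ} (hy : 0 < y) :
    Tendsto (lml f) (𝓝[<] y) (𝓝 (lml f y)) := by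
  refine (closed_nhds_basis _).tendsto_right_iff.2 fun C ⟨hC, hCc⟩ => ?_
  obtain ⟨w, hwy, hw⟩ := mem_nhdsLT_iff_exists_Ioo_subset.1 (hf.tendsto_lml hy hC)
  filter_upwards [Ioo_mem_nhdsLT (max_lt hwy hy)] with z hz
  have hz0 : 0 < z := (le_max_right _ _).trans_lt hz.1
  refine hCc.mem_of_tendsto (hf.tendsto_lml hz0) ?_
  filter_upwards [Ioo_mem_nhdsLT ((le_max_left _ _).trans_lt hz.1)] with u hu
  exact hw ⟨hu.1, hu.2.trans hz.2⟩

end Cadlag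

theorem sSup_image_Icc_eq_max {α β : Type*} [PartialOrder α]
    [ConditionallyCompleteLinearOrder β]
    (g : α → β) {x y : α} (hxy : x < y) (hg : BddAbove (g '' Ico x y)) :
    sSup (g '' Icc x y) = max (sSup (g '' Ico x y)) (g y) := by
  rw [← Ico_union_right hxy.le, image_union, image_singleton,
    csSup_union hg ((nonempty_Ico.2 hxy).image g) bddAbove_singleton (singleton_nonempty _),
    csSup_singleton]

section

variable {f₁ f₂ : ℝ → ℝ} {x y : ℝ}

theorem bddAbove_sub_lml_image_Icc (h₁ : Cadlag f₁) (h₂ : Cadlag f₂) (hx : 0 ≤ x) :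
    BddAbove ((fun z => f₂ z - lml f₁ z) '' Icc x y) := by
  have hsub : Icc x y ⊆ Icc 0 y := Icc_subset_Icc_left hx
  obtain ⟨A, hA⟩ := ((h₂.isBounded_image_Icc y).subset (image_mono hsub)).bddAbove
  obtain ⟨B, hB⟩ := ((h₁.isBounded_lml_image_Icc y).subset (image_mono hsub)).bddBelow
  refine ⟨A - B, ?_⟩
  rintro _ ⟨z, hz, rfl⟩
  linarith [hA (mem_image_of_mem f₂ hz), hB (mem_image_of_mem (lml f₁) hz)]

theorem lml_sub_lml_le_Sm (h₁ : Cadlag f₁) (h₂ : Cadlag f₂) (hx : 0 ≤ x) (hxy : x < y) :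
    lml f₂ y - lml f₁ y ≤ Sm f₁ f₂ x y := by
  have hbdd := (bddAbove_sub_lml_image_Icc h₁ h₂ hx (y := y)).mono
    (image_mono Ico_subset_Icc_self)
  have hy : 0 < y := hx.trans_lt hxy
  rw [Sm]
  refine le_of_tendsto ((h₂.tendsto_lml hy).sub (h₁.tendsto_lml_lml hy)) ?_
  filter_upwards [Ico_mem_nhdsLT hxy] with z hz
  exact le_csSup hbdd (mem_image_of_mem _ hz)

end

theorem stmt2_general (f₁ f₂ : ℝ → ℝ) (h₁ : Cadlag f₁) (h₂ : Cadlag f₂)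
    (hj₂ : NonnegJumps f₂)
    (x y : ℝ) (hx : 0 ≤ x) (hxy : x < y) :
    S f₁ f₂ x y - Sm f₁ f₂ x y = max (S f₁ f₂ y y - Sm f₁ f₂ x y) 0 ∧
    max (S f₁ f₂ y y - Sm f₁ f₂ x y) 0 ≤ f₂ y - lml f₂ y := by
  have hSyy : S f₁ f₂ y y = f₂ y - lml f₁ y := by
    rw [S, Icc_self, image_singleton, csSup_singleton]
  have hS : S f₁ f₂ x y = max (Sm f₁ f₂ x y) (f₂ y - lml f₁ y) :=
    sSup_image_Icc_eq_max _ hxy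
      ((bddAbove_sub_lml_image_Icc h₁ h₂ hx).mono (image_mono Ico_subset_Icc_self))
  have hleft := lml_sub_lml_le_Sm h₁ h₂ hx hxy
  have hjump := hj₂ y (hx.trans hxy.le)
  rw [hSyy, hS, ← max_sub_sub_right, sub_self, max_comm]
  exact ⟨rfl, max_le (by linarith) (by linarith)⟩

theorem stmt2 (f₁ f₂ : ℝ → ℝ) (h₁ : Cadlag f₁) (h₂ : Cadlag f₂)
    (hj₁ : NonnegJumps f₁) (hj₂ : NonnegJumps f₂)
    (x y : ℝ) (hx : 0 ≤ x) (hxy : x < y) :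
    S f₁ f₂ x y - Sm f₁ f₂ x y = max (S f₁ f₂ y y - Sm f₁ f₂ x y) 0 ∧
    max (S f₁ f₂ y y - Sm f₁ f₂ x y) 0 ≤ f₂ y - lml f₂ y :=
  stmt2_general f₁ f₂ h₁ h₂ hj₂ x y hx hxy
end

section
/- Let f₁, f₂ : [0,∞) → ℝ be cadlag with nonnegative jumps and f₁(0⁻) = f₂(0⁻) = 0. Define the Pitman transform W(f₁,f₂) = (g₁,g₂) by g₁(t) = f₁(t) + s(0,t) and g₂(t) = f₂(t) - s(0,t), where s(x,y) = sup_{z∈[x,y]} (f₂(z) - f₁(z⁻)). Then g₁ and g₂ are cadlag with nonnegative jumps, and g₁(t) + g₂(t) = f₁(t) + f₂(t) for all t. -/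
/-!
Let `s t = S f₁ f₂ 0 t` be the running supremum of `h z = f₂ z - f₁ (z⁻)`. Since `h` has one-sided
limits everywhere, `s` is finite and nondecreasing, with left limit `Sm f₁ f₂ 0 x` at `x`. It is
right-continuous because `h (x⁺) = f₂ x - f₁ x ≤ h x`, by the nonnegative jump of `f₁`. At `x > 0`
we have `s x = max (h x) (s (x⁻))` and `f₂ (x⁻) - f₁ (x⁻) ≤ s (x⁻)`, so the jump of `s` lies between
`0` and the jump of `f₂`; hence `f₁ + s` and `f₂ - s` have nonnegative jumps.
-/

open Filter Set

/-- First component of the Pitman transform. -/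
noncomputable def Wp1 (f₁ f₂ : ℝ → ℝ) : ℝ → ℝ := fun t => f₁ t + S f₁ f₂ 0 t

/-- Second component of the Pitman transform. -/
noncomputable def Wp2 (f₁ f₂ : ℝ → ℝ) : ℝ → ℝ := fun t => f₂ t - S f₁ f₂ 0 t

open Topology Function

section OneSidedLimits

variable {f : ℝ → ℝ} {s : Set ℝ} {a x c : ℝ}

theorem leftLim_mem_of_mapsTo (hf : Tendsto f (𝓝[<] x) (𝓝 (leftLim f x))) (hs : IsClosed s)
    (hax : a < x) (h : MapsTo f (Ioo a x) s) : leftLim f x ∈ s :=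
  hs.mem_of_tendsto hf (eventually_of_mem (Ioo_mem_nhdsLT hax) fun _ hy => h hy)

theorem tendsto_leftLim_nhdsGT (hlim : ∀ᶠ z in 𝓝[>] x, Tendsto f (𝓝[<] z) (𝓝 (leftLim f z)))
    (hf : Tendsto f (𝓝[>] x) (𝓝 c)) : Tendsto (leftLim f) (𝓝[>] x) (𝓝 c) := by
  refine (closed_nhds_basis c).tendsto_right_iff.2 fun U ⟨hU, hUc⟩ => ?_
  obtain ⟨u, hxu, hu⟩ := mem_nhdsGT_iff_exists_Ioo_subset.1 (hf hU)
  filter_upwards [hlim, Ioo_mem_nhdsGT hxu] with z hz hzu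
  exact leftLim_mem_of_mapsTo hz hUc hzu.1 fun y hy => hu ⟨hy.1, hy.2.trans hzu.2⟩

theorem tendsto_leftLim_nhdsLT (hlim : ∀ᶠ z in 𝓝[<] x, Tendsto f (𝓝[<] z) (𝓝 (leftLim f z)))
    (hf : Tendsto f (𝓝[<] x) (𝓝 c)) : Tendsto (leftLim f) (𝓝[<] x) (𝓝 c) := by
  refine (closed_nhds_basis c).tendsto_right_iff.2 fun U ⟨hU, hUc⟩ => ?_
  obtain ⟨l, hlx, hl⟩ := mem_nhdsLT_iff_exists_Ioo_subset.1 (hf hU)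
  filter_upwards [hlim, Ioo_mem_nhdsLT hlx] with z hz hzl
  exact leftLim_mem_of_mapsTo hz hUc hzl.1 fun y hy => hl ⟨hy.1, hy.2.trans hzl.2⟩

theorem bddAbove_image_Icc_of_tendsto (hr : ∀ x, a ≤ x → ∃ c, Tendsto f (𝓝[>] x) (𝓝 c))
    (hl : ∀ x, a < x → ∃ c, Tendsto f (𝓝[<] x) (𝓝 c)) (t : ℝ) : BddAbove (f '' Icc a t) := by
  have hsup {l₁ l₂ : Filter ℝ} (h₁ : IsBoundedUnder (· ≤ ·) l₁ f)
      (h₂ : IsBoundedUnder (· ≤ ·) l₂ f) : IsBoundedUnder (· ≤ ·) (l₁ ⊔ l₂) f := by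
    rw [IsBoundedUnder, map_sup]
    exact isBounded_sup h₁ h₂
  have hge : ∀ x, a ≤ x → IsBoundedUnder (· ≤ ·) (𝓝[≥] x) f := fun x hx => by
    obtain ⟨c, hc⟩ := hr x hx
    rw [← Ioi_insert, nhdsWithin_insert]
    exact hsup (tendsto_pure_nhds f x).isBoundedUnder_le hc.isBoundedUnder_le
  have hloc : ∀ x ∈ Icc a t, IsBoundedUnder (· ≤ ·) (𝓝[Icc a t] x) f := by
    rintro x ⟨hax, -⟩
    obtain rfl | hax := hax.eq_or_lt
    · exact (hge a le_rfl).mono (nhdsWithin_mono _ Icc_subset_Ici_self)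
    · obtain ⟨c, hc⟩ := hl x hax
      refine (hsup hc.isBoundedUnder_le (hge x hax.le)).mono ?_
      rw [nhdsLT_sup_nhdsGE]
      exact nhdsWithin_le_nhds
  refine isCompact_Icc.induction_on (p := fun s => BddAbove (f '' s)) (by simp)
    (fun s u hsu hu => hu.mono (image_mono hsu)) (fun s u hs hu => ?_) fun x hx => ?_
  · rw [image_union]
    exact hs.union hu
  · obtain ⟨b, hb⟩ := hloc x hx
    exact ⟨{y | f y ≤ b}, hb, b, by rintro _ ⟨y, hy, rfl⟩; exact hy⟩

end OneSidedLimits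

section RunningSup

variable {g : ℝ → ℝ} {a x c : ℝ}

theorem tendsto_sSup_image_Icc_nhdsLT (hbdd : BddAbove (g '' Ico a x)) (hax : a < x) :
    Tendsto (fun t => sSup (g '' Icc a t)) (𝓝[<] x) (𝓝 (sSup (g '' Ico a x))) := by
  refine tendsto_order.2 ⟨fun b hb => ?_, fun b hb => ?_⟩
  · obtain ⟨_, ⟨y, hy, rfl⟩, hby⟩ := exists_lt_of_lt_csSup ((nonempty_Ico.2 hax).image g) hb
    filter_upwards [Ico_mem_nhdsLT hy.2] with t ht
    exact hby.trans_le (le_csSup (hbdd.mono (image_mono (Icc_subset_Ico_right ht.2)))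
      ⟨y, ⟨hy.1, ht.1⟩, rfl⟩)
  · filter_upwards [Ioo_mem_nhdsLT hax] with t ht
    exact (csSup_le_csSup hbdd ((nonempty_Icc.2 ht.1.le).image g)
      (image_mono (Icc_subset_Ico_right ht.2))).trans_lt hb

theorem continuousWithinAt_sSup_image_Icc (hbdd : ∀ t, BddAbove (g '' Icc a t)) (hax : a ≤ x)
    (hg : Tendsto g (𝓝[>] x) (𝓝 c)) (hcx : c ≤ g x) :
    ContinuousWithinAt (fun t => sSup (g '' Icc a t)) (Ici x) x := by
  have hgx : g x ≤ sSup (g '' Icc a x) := le_csSup (hbdd x) ⟨x, ⟨hax, le_rfl⟩, rfl⟩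
  refine tendsto_order.2 ⟨fun b hb => ?_, fun b hb => ?_⟩
  · filter_upwards [self_mem_nhdsWithin] with t (ht : x ≤ t)
    exact hb.trans_le (csSup_le_csSup (hbdd t) ((nonempty_Icc.2 hax).image g)
      (image_mono (Icc_subset_Icc_right ht)))
  · obtain ⟨b', hb'x, hb'b⟩ := exists_between hb
    obtain ⟨u, hxu, hu⟩ := mem_nhdsGT_iff_exists_Ioo_subset.1
      (hg.eventually_lt_const ((hcx.trans hgx).trans_lt hb'x))
    filter_upwards [Ico_mem_nhdsGE hxu] with t ht
    refine (csSup_le ((nonempty_Icc.2 (hax.trans ht.1)).image g) ?_).trans_lt hb'b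
    rintro _ ⟨z, hz, rfl⟩
    rcases le_or_gt z x with hzx | hxz
    · exact (le_csSup (hbdd x) ⟨z, ⟨hz.1, hzx⟩, rfl⟩).trans hb'x.le
    · exact (hu ⟨hxz, hz.2.trans_lt ht.2⟩).le

theorem sSup_image_Icc_eq_sup (hbdd : BddAbove (g '' Icc a x)) (hax : a < x) :
    sSup (g '' Icc a x) = g x ⊔ sSup (g '' Ico a x) := by
  rw [← Ico_insert_right hax.le, image_insert_eq,
    csSup_insert (hbdd.mono (image_mono Ico_subset_Icc_self)) ((nonempty_Ico.2 hax).image g)]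

end RunningSup

section Cadlag

variable {f g : ℝ → ℝ} {x z : ℝ}

theorem lml_of_nonpos (hz : z ≤ 0) : lml f z = 0 := if_pos hz

theorem lml_of_pos (hz : 0 < z) : lml f z = leftLim f z := if_neg hz.not_ge

namespace Cadlag

theorem tendsto_nhdsLT (hf : Cadlag f) (hx : 0 < x) : Tendsto f (𝓝[<] x) (𝓝 (leftLim f x)) := by
  obtain ⟨l, hl⟩ := hf.2 x hx
  rwa [leftLim_eq_of_tendsto hl]

theorem add (hf : Cadlag f) (hg : Cadlag g) : Cadlag (f + g) :=
  ⟨fun x hx => (hf.1 x hx).add (hg.1 x hx),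
    fun _ hx => ⟨_, (hf.tendsto_nhdsLT hx).add (hg.tendsto_nhdsLT hx)⟩⟩

theorem sub (hf : Cadlag f) (hg : Cadlag g) : Cadlag (f - g) :=
  ⟨fun x hx => (hf.1 x hx).sub (hg.1 x hx),
    fun _ hx => ⟨_, (hf.tendsto_nhdsLT hx).sub (hg.tendsto_nhdsLT hx)⟩⟩

theorem lml_add (hf : Cadlag f) (hg : Cadlag g) (z : ℝ) : lml (f + g) z = lml f z + lml g z := by
  rcases le_or_gt z 0 with hz | hz
  · simp only [lml_of_nonpos hz, add_zero]
  · simp only [lml_of_pos hz]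
    exact leftLim_eq_of_tendsto ((hf.tendsto_nhdsLT hz).add (hg.tendsto_nhdsLT hz))

theorem lml_sub (hf : Cadlag f) (hg : Cadlag g) (z : ℝ) : lml (f - g) z = lml f z - lml g z := by
  rcases le_or_gt z 0 with hz | hz
  · simp only [lml_of_nonpos hz, sub_zero]
  · simp only [lml_of_pos hz]
    exact leftLim_eq_of_tendsto ((hf.tendsto_nhdsLT hz).sub (hg.tendsto_nhdsLT hz))

theorem tendsto_lml_nhdsGT (hf : Cadlag f) (hx : 0 ≤ x) : Tendsto (lml f) (𝓝[>] x) (𝓝 (f x)) := by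
  have hpos : ∀ᶠ z in 𝓝[>] x, 0 < z := eventually_nhdsWithin_of_forall fun z hz => hx.trans_lt hz
  refine (tendsto_leftLim_nhdsGT (hpos.mono fun z => hf.tendsto_nhdsLT)
    ((hf.1 x hx).mono Ioi_subset_Ici_self)).congr' ?_
  filter_upwards [hpos] with z hz using (lml_of_pos hz).symm

theorem tendsto_lml_nhdsLT (hf : Cadlag f) (hx : 0 < x) :
    Tendsto (lml f) (𝓝[<] x) (𝓝 (leftLim f x)) := by
  have hpos : ∀ᶠ z in 𝓝[<] x, 0 < z := mem_of_superset (Ioo_mem_nhdsLT hx) fun _ hz => hz.1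
  refine (tendsto_leftLim_nhdsLT (hpos.mono fun z => hf.tendsto_nhdsLT)
    (hf.tendsto_nhdsLT hx)).congr' ?_
  filter_upwards [hpos] with z hz using (lml_of_pos hz).symm

end Cadlag

theorem NonnegJumps.add (hf : Cadlag f) (hg : Cadlag g) (hjf : NonnegJumps f)
    (hjg : NonnegJumps g) : NonnegJumps (f + g) := fun z hz => by
  rw [hf.lml_add hg]
  exact add_le_add (hjf z hz) (hjg z hz)

theorem nonnegJumps_sub (hf : Cadlag f) (hg : Cadlag g)
    (hjump : ∀ z, 0 ≤ z → g z - lml g z ≤ f z - lml f z) : NonnegJumps (f - g) := fun z hz => by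
  rw [hf.lml_sub hg, Pi.sub_apply]
  linarith [hjump z hz]

end Cadlag

section PitmanTransform

variable {f₁ f₂ : ℝ → ℝ} {x z : ℝ}

theorem tendsto_sub_lml_nhdsGT (h₁ : Cadlag f₁) (h₂ : Cadlag f₂) (hx : 0 ≤ x) :
    Tendsto (fun z => f₂ z - lml f₁ z) (𝓝[>] x) (𝓝 (f₂ x - f₁ x)) :=
  ((h₂.1 x hx).mono Ioi_subset_Ici_self).tendsto.sub (h₁.tendsto_lml_nhdsGT hx)

theorem tendsto_sub_lml_nhdsLT (h₁ : Cadlag f₁) (h₂ : Cadlag f₂) (hx : 0 < x) :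
    Tendsto (fun z => f₂ z - lml f₁ z) (𝓝[<] x) (𝓝 (leftLim f₂ x - leftLim f₁ x)) :=
  (h₂.tendsto_nhdsLT hx).sub (h₁.tendsto_lml_nhdsLT hx)

theorem bddAbove_image_sub_lml (h₁ : Cadlag f₁) (h₂ : Cadlag f₂) (t : ℝ) :
    BddAbove ((fun z => f₂ z - lml f₁ z) '' Icc 0 t) :=
  bddAbove_image_Icc_of_tendsto (fun _ hx => ⟨_, tendsto_sub_lml_nhdsGT h₁ h₂ hx⟩)
    (fun _ hx => ⟨_, tendsto_sub_lml_nhdsLT h₁ h₂ hx⟩) t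

theorem S_zero_zero : S f₁ f₂ 0 0 = f₂ 0 := by
  rw [S, Icc_self, image_singleton, csSup_singleton, lml_of_nonpos le_rfl, sub_zero]

theorem cadlag_S (h₁ : Cadlag f₁) (h₂ : Cadlag f₂) (hj₁ : NonnegJumps f₁) : Cadlag (S f₁ f₂ 0) :=
  ⟨fun x hx => continuousWithinAt_sSup_image_Icc (bddAbove_image_sub_lml h₁ h₂) hx
      (tendsto_sub_lml_nhdsGT h₁ h₂ hx) (sub_le_sub_left (hj₁ x hx) _),
    fun x hx => ⟨_, tendsto_sSup_image_Icc_nhdsLT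
      ((bddAbove_image_sub_lml h₁ h₂ x).mono (image_mono Ico_subset_Icc_self)) hx⟩⟩

theorem leftLim_S (h₁ : Cadlag f₁) (h₂ : Cadlag f₂) (hx : 0 < x) :
    leftLim (S f₁ f₂ 0) x = Sm f₁ f₂ 0 x :=
  leftLim_eq_of_tendsto (tendsto_sSup_image_Icc_nhdsLT
    ((bddAbove_image_sub_lml h₁ h₂ x).mono (image_mono Ico_subset_Icc_self)) hx)

theorem S_eq_sup_Sm (h₁ : Cadlag f₁) (h₂ : Cadlag f₂) (hx : 0 < x) :
    S f₁ f₂ 0 x = (f₂ x - leftLim f₁ x) ⊔ Sm f₁ f₂ 0 x := by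
  rw [← lml_of_pos hx]
  exact sSup_image_Icc_eq_sup (bddAbove_image_sub_lml h₁ h₂ x) hx

theorem leftLim_sub_leftLim_le_Sm (h₁ : Cadlag f₁) (h₂ : Cadlag f₂) (hx : 0 < x) :
    leftLim f₂ x - leftLim f₁ x ≤ Sm f₁ f₂ 0 x := by
  refine le_of_tendsto (tendsto_sub_lml_nhdsLT h₁ h₂ hx) ?_
  filter_upwards [Ioo_mem_nhdsLT hx] with z hz
  exact le_csSup ((bddAbove_image_sub_lml h₁ h₂ x).mono (image_mono Ico_subset_Icc_self))
    ⟨z, ⟨hz.1.le, hz.2⟩, rfl⟩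

theorem nonnegJumps_S (h₁ : Cadlag f₁) (h₂ : Cadlag f₂) (hf₂ : 0 ≤ f₂ 0) :
    NonnegJumps (S f₁ f₂ 0) := fun z hz => by
  obtain rfl | hz := hz.eq_or_lt
  · rwa [lml_of_nonpos le_rfl, S_zero_zero]
  · rw [lml_of_pos hz, leftLim_S h₁ h₂ hz, S_eq_sup_Sm h₁ h₂ hz]
    exact le_sup_right

theorem S_sub_lml_S_le (h₁ : Cadlag f₁) (h₂ : Cadlag f₂) (hj₂ : NonnegJumps f₂) (hz : 0 ≤ z) :
    S f₁ f₂ 0 z - lml (S f₁ f₂ 0) z ≤ f₂ z - lml f₂ z := by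
  obtain rfl | hz := hz.eq_or_lt
  · rw [lml_of_nonpos le_rfl, lml_of_nonpos le_rfl, S_zero_zero]
  · have hf₂ := hj₂ z hz.le
    rw [lml_of_pos hz] at hf₂ ⊢
    rw [lml_of_pos hz, leftLim_S h₁ h₂ hz, S_eq_sup_Sm h₁ h₂ hz, sub_le_iff_le_add, sup_le_iff]
    constructor
    · linarith [leftLim_sub_leftLim_le_Sm h₁ h₂ hz]
    · linarith

end PitmanTransform

theorem stmt3 (f₁ f₂ : ℝ → ℝ) (h₁ : Cadlag f₁) (h₂ : Cadlag f₂)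
    (hj₁ : NonnegJumps f₁) (hj₂ : NonnegJumps f₂) :
    Cadlag (Wp1 f₁ f₂) ∧ NonnegJumps (Wp1 f₁ f₂) ∧
    Cadlag (Wp2 f₁ f₂) ∧ NonnegJumps (Wp2 f₁ f₂) ∧
    ∀ t : ℝ, 0 ≤ t → Wp1 f₁ f₂ t + Wp2 f₁ f₂ t = f₁ t + f₂ t := by
  have hS : Cadlag (S f₁ f₂ 0) := cadlag_S h₁ h₂ hj₁
  have hf₂ : 0 ≤ f₂ 0 := by simpa only [lml_of_nonpos le_rfl] using hj₂ 0 le_rfl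
  exact ⟨h₁.add hS, hj₁.add h₁ hS (nonnegJumps_S h₁ h₂ hf₂), h₂.sub hS,
    nonnegJumps_sub h₂ hS fun z hz => S_sub_lml_S_le h₁ h₂ hj₂ hz,
    fun t _ => add_add_sub_cancel _ _ _⟩
end
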